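/- Let X be a complete p-uniformly convex space and T₁, …, T_r : X → X firmly nonexpansive with F = ⋂ Fix(T_i) ≠ ∅. For x₀ ∈ X define (x_n) by d(x_{n+1}, T_{n(mod r)+1} x_n) ≤ ε_n with Σε_n < ∞. Then for each i, lim_{n→∞} d(x_n, T_i x_n) = 0, and (x_n) Δ-converges to a point u ∈ F. If moreover some T_i has boundedly compact image, then (x_n) converges strongly to u. -/

import Mathlib

/-!
Fix a common fixed point `z`. The distances `d(x n, z)` are quasi-Fejér monotone, hence converge.
Firm nonexpansiveness gives `d(T x, z)^p + (c/2) d(x, T x)^p ≤ d(x, z)^p`, which forces the residual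
of the map applied at step `n` to vanish; since every map recurs within `r` steps, all residuals
`d(x n, T i (x n))` vanish. In a complete `p`-uniformly convex space bounded sequences have unique
asymptotic centers. Vanishing residuals make the asymptotic center of every subsequence a common
fixed point, and convergence of the distances to common fixed points then makes it independent of
the subsequence. Under bounded compactness a subsequence converges strongly, necessarily to the
Δ-limit `u`, and convergence of `d(x n, u)` upgrades this to the whole sequence.
-/

open Filter Topology Metric Set

/-- A (chosen) geodesic bicombing witnessing that `X` is a geodesic space:
`geo x y t` is the point at parameter fraction `t ∈ [0,1]` on a geodesic from `x` to `y`. -/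
structure Geodesic (X : Type*) [MetricSpace X] where
  geo : X → X → ℝ → X
  geo_zero : ∀ x y, geo x y 0 = x
  geo_one : ∀ x y, geo x y 1 = y
  geo_dist : ∀ x y : X, ∀ s ∈ Set.Icc (0:ℝ) 1, ∀ t ∈ Set.Icc (0:ℝ) 1,
    dist (geo x y s) (geo x y t) = |s - t| * dist x y
/-- `u` is an asymptotic center of the sequence `s`: it minimizes `y ↦ limsup dist y (s n)`. -/
def IsAsymptoticCenter {X : Type*} [MetricSpace X] (s : ℕ → X) (u : X) : Prop :=
  ∀ y : X, Filter.limsup (fun n => dist u (s n)) Filter.atTop ≤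
    Filter.limsup (fun n => dist y (s n)) Filter.atTop

/-- `s` Δ-converges to `u`: `u` is the unique asymptotic center of every subsequence. -/
def DeltaConvergesTo {X : Type*} [MetricSpace X] (s : ℕ → X) (u : X) : Prop :=
  ∀ φ : ℕ → ℕ, StrictMono φ →
    IsAsymptoticCenter (s ∘ φ) u ∧ ∀ v : X, IsAsymptoticCenter (s ∘ φ) v → v = u

def PUnifConvex {X : Type*} [MetricSpace X] (G : Geodesic X) (p c : ℝ) : Prop :=
  ∀ x y z : X, ∀ t ∈ Set.Icc (0:ℝ) 1,
    dist z (G.geo x y t) ^ p ≤ (1 - t) * dist z x ^ p + t * dist z y ^ p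
      - c / 2 * (t * (1 - t)) * dist x y ^ p

def FirmlyNonexpansive {X : Type*} [MetricSpace X] (G : Geodesic X) (T : X → X) : Prop :=
  ∀ x y : X, ∀ lam ∈ Set.Ico (0:ℝ) 1,
    dist (T x) (T y) ≤ dist (G.geo x (T x) lam) (G.geo y (T y) lam)

open Function

theorem exists_tendsto_of_le_add_of_summable {a ε : ℕ → ℝ} (ha : ∀ n, 0 ≤ a n)
    (hε : Summable ε) (h : ∀ n, a (n + 1) ≤ a n + ε n) : ∃ l, Tendsto a atTop (𝓝 l) := by
  set S : ℕ → ℝ := fun n => ∑ k ∈ Finset.range n, ε k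
  have hS : Tendsto S atTop (𝓝 (∑' k, ε k)) := hε.hasSum.tendsto_sum_nat
  obtain ⟨C, hC⟩ := hS.bddAbove_range
  have hanti : Antitone fun n => a n - S n := antitone_nat_of_succ_le fun n => by
    simp only [S, Finset.sum_range_succ]; linarith [h n]
  have hbdd : BddBelow (range fun n => a n - S n) :=
    ⟨-C, by rintro _ ⟨n, rfl⟩; linarith [ha n, hC ⟨n, rfl⟩]⟩
  exact ⟨_, by simpa using (tendsto_atTop_ciInf hanti hbdd).add hS⟩

theorem tendsto_zero_of_tendsto_rpow {f : ℕ → ℝ} {p : ℝ} (hf : ∀ n, 0 ≤ f n) (hp : 0 < p)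
    (h : Tendsto (fun n => f n ^ p) atTop (𝓝 0)) : Tendsto f atTop (𝓝 0) := by
  simpa [Real.zero_rpow (inv_ne_zero hp.ne'), Real.rpow_rpow_inv (hf _) hp.ne'] using
    h.rpow_const (p := p⁻¹) (Or.inr (inv_nonneg.2 hp.le))

theorem tendsto_dist_add_of_tendsto_dist_succ {X : Type*} [PseudoMetricSpace X] {x : ℕ → X}
    (h : Tendsto (fun n => dist (x (n + 1)) (x n)) atTop (𝓝 0)) (k : ℕ) :
    Tendsto (fun n => dist (x n) (x (n + k))) atTop (𝓝 0) := by
  induction k with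
  | zero => simp
  | succ k ih =>
    refine squeeze_zero (fun _ => dist_nonneg) (fun n => dist_triangle_right _ _ (x (n + k)))
      (by simpa [add_assoc] using ih.add (h.comp (tendsto_add_atTop_nat k)))

theorem Geodesic.geo_self {X : Type*} [MetricSpace X] (G : Geodesic X) (z : X) {t : ℝ}
    (ht : t ∈ Icc (0 : ℝ) 1) : G.geo z z t = z := by
  simpa [G.geo_zero] using G.geo_dist z z t ht 0 (left_mem_Icc.2 zero_le_one)

namespace FirmlyNonexpansive

variable {X : Type*} [MetricSpace X] {G : Geodesic X} {T : X → X}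

theorem lipschitzWith_one (hT : FirmlyNonexpansive G T) : LipschitzWith 1 T :=
  .of_dist_le_mul fun x y => by
    simpa [G.geo_zero] using hT x y 0 (left_mem_Ico.2 zero_lt_one)

theorem dist_le_of_isFixedPt (hT : FirmlyNonexpansive G T) {z : X} (hz : IsFixedPt T z)
    (x : X) : dist (T x) z ≤ dist x z := by
  simpa [hz.eq] using hT.lipschitzWith_one.dist_le_mul x z

/-- Property (P₁) of the paper, with exponent `p` and constant `c / 2`. -/
theorem rpow_dist_add_le {p c : ℝ} (hp : 0 ≤ p) (hpc : PUnifConvex G p c)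
    (hT : FirmlyNonexpansive G T) {z : X} (hz : IsFixedPt T z) (x : X) :
    dist (T x) z ^ p + c / 2 * dist x (T x) ^ p ≤ dist x z ^ p := by
  set A := dist (T x) z ^ p
  set B := dist x z ^ p
  set D := dist x (T x) ^ p
  have key : ∀ lam ∈ Ioo (0 : ℝ) 1, c / 2 * D * lam ≤ B - A := by
    rintro lam ⟨hlam0, hlam1⟩
    have hIcc : lam ∈ Icc (0 : ℝ) 1 := ⟨hlam0.le, hlam1.le⟩
    have hfirm : dist (T x) z ≤ dist (G.geo x (T x) lam) z := by
      simpa [hz.eq, G.geo_self z hIcc] using hT x z lam ⟨hlam0.le, hlam1⟩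
    have hconv := hpc x (T x) z lam hIcc
    rw [dist_comm z, dist_comm z x, dist_comm z (T x)] at hconv
    have hA : A ≤ (1 - lam) * B + lam * A - c / 2 * (lam * (1 - lam)) * D :=
      (Real.rpow_le_rpow dist_nonneg hfirm hp).trans hconv
    refine le_of_mul_le_mul_left ?_ (sub_pos.2 hlam1)
    nlinarith
  have hlim : Tendsto (fun lam => c / 2 * D * lam) (𝓝[<] 1) (𝓝 (c / 2 * D * 1)) :=
    ((continuous_const_mul _).tendsto 1).mono_left nhdsWithin_le_nhds
  linarith [le_of_tendsto hlim (eventually_of_mem (Ioo_mem_nhdsLT zero_lt_one) key)]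

end FirmlyNonexpansive

section AsymptoticCenter

variable {X : Type*} [MetricSpace X] {s : ℕ → X}

noncomputable def asymptoticRadius (s : ℕ → X) (y : X) : ℝ :=
  limsup (fun n => dist y (s n)) atTop

theorem isBoundedUnder_dist (hs : Bornology.IsBounded (range s)) (y : X) :
    IsBoundedUnder (· ≤ ·) atTop fun n => dist y (s n) := by
  obtain ⟨C, hC⟩ := (isBounded_iff_subset_closedBall y).1 hs
  exact isBoundedUnder_of ⟨C, fun n => by simpa [dist_comm] using hC (mem_range_self n)⟩

theorem isCoboundedUnder_dist (y : X) :
    IsCoboundedUnder (· ≤ ·) atTop fun n => dist y (s n) :=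
  isCoboundedUnder_le_of_le atTop fun _ => dist_nonneg

theorem asymptoticRadius_nonneg (hs : Bornology.IsBounded (range s)) (y : X) :
    0 ≤ asymptoticRadius s y :=
  le_limsup_of_frequently_le (.of_forall fun _ => dist_nonneg) (isBoundedUnder_dist hs y)

theorem asymptoticRadius_le_dist_add (hs : Bornology.IsBounded (range s)) (y y' : X) :
    asymptoticRadius s y ≤ dist y y' + asymptoticRadius s y' :=
  calc asymptoticRadius s y ≤ limsup (fun n => dist y y' + dist y' (s n)) atTop :=
        limsup_le_limsup (.of_forall fun _ => dist_triangle _ _ _) (isCoboundedUnder_dist y)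
          (isBoundedUnder_le_add isBoundedUnder_const (isBoundedUnder_dist hs y'))
    _ = dist y y' + asymptoticRadius s y' :=
        limsup_const_add _ _ _ (isBoundedUnder_dist hs y') (isCoboundedUnder_dist y')

theorem rpow_asymptoticRadius (hs : Bornology.IsBounded (range s)) {p : ℝ} (hp : 0 < p) (y : X) :
    asymptoticRadius s y ^ p = limsup (fun n => dist y (s n) ^ p) atTop := by
  have hmono : Monotone fun t : ℝ => max t 0 ^ p := fun a b hab =>
    Real.rpow_le_rpow (le_max_right _ _) (max_le_max hab le_rfl) hp.le
  have hcont : Continuous fun t : ℝ => max t 0 ^ p :=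
    (continuous_id.max continuous_const).rpow_const fun _ => Or.inr hp.le
  calc asymptoticRadius s y ^ p = max (asymptoticRadius s y) 0 ^ p := by
        rw [max_eq_left (asymptoticRadius_nonneg hs y)]
    _ = _ := (hmono.map_limsup_of_continuousAt (fun n => dist y (s n)) hcont.continuousAt
          (isBoundedUnder_dist hs y) (isCoboundedUnder_dist y)).trans (by simp [Function.comp_def])

variable {G : Geodesic X} {p c : ℝ}

theorem rpow_asymptoticRadius_midpoint_le (hp : 0 < p) (hpc : PUnifConvex G p c)
    (hs : Bornology.IsBounded (range s)) (u v : X) :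
    asymptoticRadius s (G.geo u v (1 / 2)) ^ p ≤
      (asymptoticRadius s u ^ p + asymptoticRadius s v ^ p) / 2 - c / 8 * dist u v ^ p := by
  set Φ : ℝ → ℝ := fun δ => ((asymptoticRadius s u + δ) ^ p + (asymptoticRadius s v + δ) ^ p) / 2
    - c / 8 * dist u v ^ p
  have hΦ : ∀ δ ∈ Ioi (0 : ℝ), asymptoticRadius s (G.geo u v (1 / 2)) ^ p ≤ Φ δ := by
    intro δ hδ
    rw [rpow_asymptoticRadius hs hp]
    refine limsup_le_of_le (isCoboundedUnder_le_of_le atTop fun _ => by positivity) ?_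
    filter_upwards
      [eventually_lt_of_limsup_lt (lt_add_of_pos_right _ hδ) (isBoundedUnder_dist hs u),
        eventually_lt_of_limsup_lt (lt_add_of_pos_right _ hδ) (isBoundedUnder_dist hs v)]
      with n hun hvn
    have hmid := hpc u v (s n) (1 / 2) ⟨by norm_num, by norm_num⟩
    rw [dist_comm (s n), dist_comm (s n), dist_comm (s n)] at hmid
    have hu := Real.rpow_le_rpow dist_nonneg hun.le hp.le
    have hv := Real.rpow_le_rpow dist_nonneg hvn.le hp.le
    simp only [Φ, asymptoticRadius]
    norm_num at hmid
    linarith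
  have hcont : Continuous Φ := by
    simp only [Φ]
    fun_prop (disch := exact hp.le)
  simpa [Φ] using ge_of_tendsto (hcont.tendsto 0 |>.mono_left nhdsWithin_le_nhds)
    (eventually_nhdsWithin_of_forall hΦ)

theorem IsAsymptoticCenter.eq (hp : 0 < p) (hc : 0 < c) (hpc : PUnifConvex G p c)
    (hs : Bornology.IsBounded (range s)) {u v : X} (hu : IsAsymptoticCenter s u)
    (hv : IsAsymptoticCenter s v) : u = v := by
  have hmid := rpow_asymptoticRadius_midpoint_le hp hpc hs u v
  have hle : asymptoticRadius s u ^ p ≤ asymptoticRadius s (G.geo u v (1 / 2)) ^ p :=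
    Real.rpow_le_rpow (asymptoticRadius_nonneg hs u) (hu _) hp.le
  have huv : asymptoticRadius s u = asymptoticRadius s v := le_antisymm (hu v) (hv u)
  have hdist : dist u v ^ p ≤ 0 := by
    rw [huv] at hle hmid
    nlinarith
  by_contra hne
  exact (Real.rpow_pos_of_pos (dist_pos.2 hne) p).not_ge hdist

/-- A minimizing sequence of the asymptotic radius is Cauchy by uniform convexity. -/
theorem exists_isAsymptoticCenter [CompleteSpace X] (hp : 0 < p) (hc : 0 < c)
    (hpc : PUnifConvex G p c) (hs : Bornology.IsBounded (range s)) :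
    ∃ u, IsAsymptoticCenter s u := by
  have hbdd : BddBelow (range (asymptoticRadius s)) :=
    ⟨0, by rintro _ ⟨y, rfl⟩; exact asymptoticRadius_nonneg hs y⟩
  obtain ⟨r, hr_anti, hr_lim, hr_mem⟩ := exists_seq_tendsto_sInf ⟨_, mem_range_self (s 0)⟩ hbdd
  set ρ := sInf (range (asymptoticRadius s))
  have hρ : ∀ y, ρ ≤ asymptoticRadius s y := fun y => csInf_le hbdd (mem_range_self y)
  have hρ0 : 0 ≤ ρ := le_csInf (range_nonempty_iff_nonempty.2 ⟨s 0⟩) (by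
    rintro _ ⟨y, rfl⟩; exact asymptoticRadius_nonneg hs y)
  choose Y hY using hr_mem
  have hdist : ∀ n m N, N ≤ n → N ≤ m → dist (Y n) (Y m) ^ p ≤ (r N ^ p - ρ ^ p) / (c / 8) := by
    intro n m N hn hm
    have hmid := rpow_asymptoticRadius_midpoint_le hp hpc hs (Y n) (Y m)
    have hρmid := Real.rpow_le_rpow hρ0 (hρ (G.geo (Y n) (Y m) (1 / 2))) hp.le
    have hYn := Real.rpow_le_rpow (asymptoticRadius_nonneg hs _) (hY n ▸ hr_anti hn) hp.le
    have hYm := Real.rpow_le_rpow (asymptoticRadius_nonneg hs _) (hY m ▸ hr_anti hm) hp.le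
    rw [le_div_iff₀' (by positivity)]
    linarith
  have hY_cauchy : CauchySeq Y := by
    refine cauchySeq_of_le_tendsto_0 (fun N => ((r N ^ p - ρ ^ p) / (c / 8)) ^ p⁻¹)
      (fun n m N hn hm => ?_) ?_
    · rw [← Real.rpow_rpow_inv dist_nonneg hp.ne' (x := dist (Y n) (Y m))]
      exact Real.rpow_le_rpow (by positivity) (hdist n m N hn hm) (by positivity)
    · simpa [Real.zero_rpow (inv_ne_zero hp.ne')] using
        (((hr_lim.rpow_const (Or.inr hp.le)).sub_const (ρ ^ p)).div_const (c / 8)).rpow_const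
          (Or.inr (inv_nonneg.2 hp.le))
  obtain ⟨u, hu⟩ := cauchySeq_tendsto_of_complete hY_cauchy
  have hlim : Tendsto (fun k => dist u (Y k) + r k) atTop (𝓝 ρ) := by
    simpa using ((tendsto_const_nhds (x := u)).dist hu).add hr_lim
  refine ⟨u, fun y => le_trans ?_ (hρ y)⟩
  exact ge_of_tendsto hlim (.of_forall fun k => hY k ▸ asymptoticRadius_le_dist_add hs u (Y k))

end AsymptoticCenter

section DeltaConvergence

variable {X : Type*} [MetricSpace X] {G : Geodesic X} {p c : ℝ} {s : ℕ → X}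

theorem isBounded_range_of_tendsto_dist {z : X} {l : ℝ}
    (h : Tendsto (fun n => dist (s n) z) atTop (𝓝 l)) : Bornology.IsBounded (range s) := by
  obtain ⟨C, hC⟩ := h.bddAbove_range
  exact (isBounded_iff_subset_closedBall z).2 ⟨C, by rintro _ ⟨n, rfl⟩; exact hC (mem_range_self n)⟩

theorem asymptoticRadius_comp_of_tendsto {φ : ℕ → ℕ} (hφ : StrictMono φ) {z : X} {l : ℝ}
    (h : Tendsto (fun n => dist (s n) z) atTop (𝓝 l)) :
    asymptoticRadius (s ∘ φ) z = asymptoticRadius s z := by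
  have h' : Tendsto (fun n => dist z (s n)) atTop (𝓝 l) := by simpa only [dist_comm] using h
  exact (h'.comp hφ.tendsto_atTop).limsup_eq.trans h'.limsup_eq.symm

theorem IsAsymptoticCenter.map_of_tendsto_dist {T : X → X} (hT : LipschitzWith 1 T)
    (hs : Bornology.IsBounded (range s))
    (hreg : Tendsto (fun n => dist (s n) (T (s n))) atTop (𝓝 0))
    {u : X} (hu : IsAsymptoticCenter s u) : IsAsymptoticCenter s (T u) := by
  refine fun y => le_trans ?_ (hu y)
  have hreg_bdd : IsBoundedUnder (· ≤ ·) atTop fun n => dist (s n) (T (s n)) :=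
    hreg.isBoundedUnder_le
  calc asymptoticRadius s (T u)
      ≤ limsup ((fun n => dist u (s n)) + fun n => dist (s n) (T (s n))) atTop := by
        refine limsup_le_limsup (.of_forall fun n => ?_) (isCoboundedUnder_dist _)
          (isBoundedUnder_le_add (isBoundedUnder_dist hs u) hreg_bdd)
        show dist (T u) (s n) ≤ dist u (s n) + dist (s n) (T (s n))
        have hTu := hT.dist_le_mul u (s n)
        rw [NNReal.coe_one, one_mul] at hTu
        linarith [dist_triangle (T u) (T (s n)) (s n), dist_comm (s n) (T (s n))]
    _ ≤ asymptoticRadius s u + limsup (fun n => dist (s n) (T (s n))) atTop :=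
        limsup_add_le (isBoundedUnder_of ⟨0, fun _ => dist_nonneg⟩) (isBoundedUnder_dist hs u)
          (isCoboundedUnder_le_of_le atTop fun _ => dist_nonneg) hreg_bdd
    _ = asymptoticRadius s u := by rw [hreg.limsup_eq, add_zero]

/-- Opial's argument: if the distances to every point of `F` converge and asymptotic centers of
subsequences lie in `F`, all subsequences share the asymptotic center of the whole sequence. -/
theorem exists_deltaConvergesTo [CompleteSpace X] (hp : 0 < p) (hc : 0 < c)
    (hpc : PUnifConvex G p c) (hs : Bornology.IsBounded (range s)) {F : Set X}
    (hF : ∀ z ∈ F, ∃ l, Tendsto (fun n => dist (s n) z) atTop (𝓝 l))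
    (hcenter : ∀ φ : ℕ → ℕ, StrictMono φ → ∀ w, IsAsymptoticCenter (s ∘ φ) w → w ∈ F) :
    ∃ u ∈ F, DeltaConvergesTo s u := by
  obtain ⟨u, hu⟩ := exists_isAsymptoticCenter hp hc hpc hs
  have huF : u ∈ F := hcenter id strictMono_id u hu
  refine ⟨u, huF, fun φ hφ => ?_⟩
  have hsφ : Bornology.IsBounded (range (s ∘ φ)) := hs.subset (range_comp_subset_range φ s)
  obtain ⟨v, hv⟩ := exists_isAsymptoticCenter hp hc hpc hsφ
  obtain ⟨_, hlu⟩ := hF u huF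
  obtain ⟨_, hlv⟩ := hF v (hcenter φ hφ v hv)
  have hu' : IsAsymptoticCenter (s ∘ φ) u := fun y =>
    calc asymptoticRadius (s ∘ φ) u = asymptoticRadius s u :=
          asymptoticRadius_comp_of_tendsto hφ hlu
      _ ≤ asymptoticRadius s v := hu v
      _ = asymptoticRadius (s ∘ φ) v := (asymptoticRadius_comp_of_tendsto hφ hlv).symm
      _ ≤ asymptoticRadius (s ∘ φ) y := hv y
  exact ⟨hu', fun w hw => hw.eq hp hc hpc hsφ hu'⟩

theorem DeltaConvergesTo.tendsto_of_tendsto_comp {u : X} (h : DeltaConvergesTo s u) {l : ℝ}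
    (hl : Tendsto (fun n => dist (s n) u) atTop (𝓝 l)) {φ : ℕ → ℕ} (hφ : StrictMono φ) {w : X}
    (hw : Tendsto (s ∘ φ) atTop (𝓝 w)) : Tendsto s atTop (𝓝 u) := by
  have hsφ := isBounded_range_of_tendsto (s ∘ φ) hw
  have hw0 : asymptoticRadius (s ∘ φ) w = 0 := by
    have := (tendsto_const_nhds (x := w)).dist hw
    rw [dist_self] at this
    exact this.limsup_eq
  have hwu : w = u := (h φ hφ).2 w fun y => by
    show asymptoticRadius (s ∘ φ) w ≤ asymptoticRadius (s ∘ φ) y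
    rw [hw0]
    exact asymptoticRadius_nonneg hsφ y
  have hl0 : l = 0 := tendsto_nhds_unique (hl.comp hφ.tendsto_atTop) (by
    simpa [hwu, Function.comp_def] using hw.dist (tendsto_const_nhds (x := u)))
  exact tendsto_iff_dist_tendsto_zero.2 (hl0 ▸ hl)

theorem exists_tendsto_comp_of_isCompact {T : X → X} {K : Set X} (hK : IsCompact K)
    (hTK : ∀ n, T (s n) ∈ K) (hreg : Tendsto (fun n => dist (s n) (T (s n))) atTop (𝓝 0)) :
    ∃ φ : ℕ → ℕ, ∃ w, StrictMono φ ∧ Tendsto (s ∘ φ) atTop (𝓝 w) := by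
  obtain ⟨w, -, φ, hφ, hw⟩ := hK.tendsto_subseq hTK
  refine ⟨φ, w, hφ, tendsto_iff_dist_tendsto_zero.2 (squeeze_zero (fun _ => dist_nonneg)
    (fun n => dist_triangle _ (T (s (φ n))) w) ?_)⟩
  simpa using (hreg.comp hφ.tendsto_atTop).add (tendsto_iff_dist_tendsto_zero.1 hw)

end DeltaConvergence

theorem exists_lt_mod_eq {r : ℕ} (hr : 0 < r) (i : Fin r) (n : ℕ) :
    ∃ k < r, (⟨(n + k) % r, Nat.mod_lt _ hr⟩ : Fin r) = i := by
  refine ⟨(i + (r - n % r)) % r, Nat.mod_lt _ hr, Fin.ext ?_⟩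
  have hdiv := Nat.div_add_mod n r
  have hmod := Nat.mod_lt n hr
  have : n + (i + (r - n % r)) = i + r * (n / r + 1) := by rw [mul_add]; omega
  simp only [Nat.add_mod_mod, this, Nat.add_mul_mod_self_left, Nat.mod_eq_of_lt i.isLt]

section Iteration

variable {X : Type*} [MetricSpace X] {G : Geodesic X} {ι : Type*} {T : ι → X → X} {σ : ℕ → ι}
  {ε : ℕ → ℝ} {x : ℕ → X}

theorem exists_tendsto_dist_of_isFixedPt (hT : ∀ i, FirmlyNonexpansive G (T i))
    (hε : Summable ε) (hx : ∀ n, dist (x (n + 1)) (T (σ n) (x n)) ≤ ε n) {z : X}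
    (hz : ∀ i, IsFixedPt (T i) z) : ∃ l, Tendsto (fun n => dist (x n) z) atTop (𝓝 l) :=
  exists_tendsto_of_le_add_of_summable (fun _ => dist_nonneg) hε fun n => by
    linarith [dist_triangle (x (n + 1)) (T (σ n) (x n)) z, hx n,
      (hT (σ n)).dist_le_of_isFixedPt (hz (σ n)) (x n)]

theorem tendsto_dist_apply_control_of_isFixedPt {p c : ℝ} (hp : 0 < p) (hc : 0 < c)
    (hpc : PUnifConvex G p c) (hT : ∀ i, FirmlyNonexpansive G (T i)) (hε : Summable ε)
    (hx : ∀ n, dist (x (n + 1)) (T (σ n) (x n)) ≤ ε n) {z : X} (hz : ∀ i, IsFixedPt (T i) z) :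
    Tendsto (fun n => dist (x n) (T (σ n) (x n))) atTop (𝓝 0) := by
  obtain ⟨l, hl⟩ := exists_tendsto_dist_of_isFixedPt hT hε hx hz
  have hTl : Tendsto (fun n => dist (T (σ n) (x n)) z) atTop (𝓝 l) :=
    tendsto_of_tendsto_of_tendsto_of_le_of_le (g := fun n => dist (x (n + 1)) z - ε n)
      (by simpa using (hl.comp (tendsto_add_atTop_nat 1)).sub hε.tendsto_atTop_zero) hl
      (fun n => by linarith [dist_triangle (x (n + 1)) (T (σ n) (x n)) z, hx n])
      (fun n => (hT (σ n)).dist_le_of_isFixedPt (hz (σ n)) (x n))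
  refine tendsto_zero_of_tendsto_rpow (fun _ => dist_nonneg) hp <| squeeze_zero
    (g := fun n => (dist (x n) z ^ p - dist (T (σ n) (x n)) z ^ p) / (c / 2))
    (fun _ => by positivity) (fun n => ?_) ?_
  · rw [le_div_iff₀' (by positivity)]
    linarith [(hT (σ n)).rpow_dist_add_le hp.le hpc (hz (σ n)) (x n)]
  · simpa using ((hl.rpow_const (Or.inr hp.le)).sub (hTl.rpow_const (Or.inr hp.le))).div_const _

/-- Every map recurs within `N` steps, so the residual of `T i` at `x n` is controlled by the
residual of the map applied at its next occurrence and the displacement up to it. -/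
theorem tendsto_dist_apply_of_forall_exists_lt (hT : ∀ i, LipschitzWith 1 (T i)) {N : ℕ}
    (hσ : ∀ i n, ∃ k < N, σ (n + k) = i) (hε : Tendsto ε atTop (𝓝 0))
    (hx : ∀ n, dist (x (n + 1)) (T (σ n) (x n)) ≤ ε n)
    (hD : Tendsto (fun n => dist (x n) (T (σ n) (x n))) atTop (𝓝 0)) (i : ι) :
    Tendsto (fun n => dist (x n) (T i (x n))) atTop (𝓝 0) := by
  have hstep : Tendsto (fun n => dist (x (n + 1)) (x n)) atTop (𝓝 0) :=
    squeeze_zero (g := fun n => ε n + dist (x n) (T (σ n) (x n))) (fun _ => dist_nonneg)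
      (fun n => by
        linarith [dist_triangle (x (n + 1)) (T (σ n) (x n)) (x n), hx n,
          dist_comm (x n) (T (σ n) (x n))])
      (by simpa using hε.add hD)
  choose k hkN hk using hσ i
  have hwindow : Tendsto (fun n => ∑ j ∈ Finset.range N, dist (x n) (x (n + j))) atTop (𝓝 0) := by
    simpa using tendsto_finsetSum _ fun j _ => tendsto_dist_add_of_tendsto_dist_succ hstep j
  have hDk : Tendsto (fun n => dist (x (n + k n)) (T i (x (n + k n)))) atTop (𝓝 0) := by
    simpa [Function.comp_def, hk] using
      hD.comp (tendsto_atTop_mono (fun n => Nat.le_add_right n (k n)) tendsto_id)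
  refine squeeze_zero (fun _ => dist_nonneg) (fun n => ?_)
    (by simpa using (hwindow.const_mul 2).add hDk)
  have hwin : dist (x n) (x (n + k n)) ≤ ∑ j ∈ Finset.range N, dist (x n) (x (n + j)) :=
    Finset.single_le_sum (f := fun j => dist (x n) (x (n + j))) (fun _ _ => dist_nonneg)
      (Finset.mem_range.2 (hkN n))
  have hTi := (hT i).dist_le_mul (x (n + k n)) (x n)
  rw [NNReal.coe_one, one_mul, dist_comm (x (n + k n))] at hTi
  linarith [dist_triangle4 (x n) (x (n + k n)) (T i (x (n + k n))) (T i (x n))]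

end Iteration

theorem cyclic_iteration_delta_converges_general {X : Type*} [MetricSpace X] [CompleteSpace X]
    (G : Geodesic X) (p c : ℝ) (hp : 1 < p) (hc : 0 < c) (hpc : PUnifConvex G p c)
    {r : ℕ} (hr : 0 < r) (T : Fin r → X → X)
    (hT : ∀ i, FirmlyNonexpansive G (T i))
    (hF : ∃ u : X, ∀ i, T i u = u)
    (ε : ℕ → ℝ) (hsum : Summable ε)
    (x : ℕ → X)
    (hx : ∀ n : ℕ, dist (x (n + 1)) (T ⟨n % r, Nat.mod_lt n hr⟩ (x n)) ≤ ε n) :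
    ∃ u : X, (∀ i, T i u = u) ∧
      (∀ i, Filter.Tendsto (fun n => dist (x n) (T i (x n))) Filter.atTop (nhds 0)) ∧
      DeltaConvergesTo x u ∧
      ((∃ i : Fin r, ∀ s : Set X, s ⊆ Set.range (T i) → Bornology.IsBounded s →
          IsCompact (closure s)) →
        Filter.Tendsto x Filter.atTop (nhds u)) := by
  have hp0 : 0 < p := by linarith
  obtain ⟨z, hz⟩ := hF
  have hFej : ∀ z, (∀ i, T i z = z) → ∃ l, Tendsto (fun n => dist (x n) z) atTop (𝓝 l) :=
    fun _ => exists_tendsto_dist_of_isFixedPt hT hsum hx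
  have hs : Bornology.IsBounded (range x) :=
    let ⟨_, hl⟩ := hFej z hz
    isBounded_range_of_tendsto_dist hl
  have hreg : ∀ i, Tendsto (fun n => dist (x n) (T i (x n))) atTop (𝓝 0) :=
    tendsto_dist_apply_of_forall_exists_lt (fun i => (hT i).lipschitzWith_one)
      (fun i n => exists_lt_mod_eq hr i n) hsum.tendsto_atTop_zero hx
      (tendsto_dist_apply_control_of_isFixedPt hp0 hc hpc hT hsum hx hz)
  obtain ⟨u, huF, hu⟩ := exists_deltaConvergesTo hp0 hc hpc hs (F := {z | ∀ i, T i z = z}) hFej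
    fun φ hφ w hw i =>
      have hsφ := hs.subset (range_comp_subset_range φ x)
      (hw.map_of_tendsto_dist (hT i).lipschitzWith_one hsφ ((hreg i).comp hφ.tendsto_atTop)).eq
        hp0 hc hpc hsφ hw
  refine ⟨u, huF, hreg, hu, fun ⟨i, hi⟩ => ?_⟩
  obtain ⟨l, hl⟩ := hFej u huF
  obtain ⟨φ, w, hφ, hw⟩ := exists_tendsto_comp_of_isCompact
    (hi _ (image_subset_range _ _) ((hT i).lipschitzWith_one.isBounded_image hs))
    (fun n => subset_closure (mem_image_of_mem _ (mem_range_self n))) (hreg i)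
  exact hu.tendsto_of_tendsto_comp hl hφ hw

/-- Δ-convergence (and strong convergence under bounded compactness of some image) of the
inexact cyclic iteration of finitely many firmly nonexpansive mappings with a common fixed
point in a complete `p`-uniformly convex space. -/
theorem cyclic_iteration_delta_converges {X : Type*} [MetricSpace X] [CompleteSpace X]
    (G : Geodesic X) (p c : ℝ) (hp : 1 < p) (hc : 0 < c) (hpc : PUnifConvex G p c)
    {r : ℕ} (hr : 0 < r) (T : Fin r → X → X)
    (hT : ∀ i, FirmlyNonexpansive G (T i))
    (hF : ∃ u : X, ∀ i, T i u = u)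
    (ε : ℕ → ℝ) (hsum : Summable ε)
    (x₀ : X) (x : ℕ → X) (hx0 : x 0 = x₀)
    (hx : ∀ n : ℕ, dist (x (n + 1)) (T ⟨n % r, Nat.mod_lt n hr⟩ (x n)) ≤ ε n) :
    ∃ u : X, (∀ i, T i u = u) ∧
      (∀ i, Filter.Tendsto (fun n => dist (x n) (T i (x n))) Filter.atTop (nhds 0)) ∧
      DeltaConvergesTo x u ∧
      ((∃ i : Fin r, ∀ s : Set X, s ⊆ Set.range (T i) → Bornology.IsBounded s →
          IsCompact (closure s)) →
        Filter.Tendsto x Filter.atTop (nhds u)) :=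
  cyclic_iteration_delta_converges_general G p c hp hc hpc hr T hT hF ε hsum x hx
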